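/- Let f, f', g, g' : Fin n → ℝ and ε ≥ 0 satisfy |f(i) − f'(i)| ≤ ε and |g(i) − g'(i)| ≤ ε for all i. Then for every α ∈ ℝ, every vertex of the α-sublevel subgraph of (G̃, w̃_{f,g}) is a vertex of the (α + ε)-sublevel subgraph of (G̃, w̃_{f',g'}), and every edge of the former is an edge of the latter (an ε-interleaving of the two sublevel filtrations of the doubled graph). -/

import Mathlib

/-- Vertices of the doubled graph `G̃`: `A_i`, `A'_i` (for `i : Fin n`) and `O`. -/
inductive DVert (n : ℕ) : Type
  | A : Fin n → DVert n
  | A' : Fin n → DVert n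
  | O : DVert n

open DVert

/-- The relation generating the edges of the doubled graph `G̃`:
`A_iA_j` and `A'_iA'_j` for every edge `(i,j)` of `G`; `A_iA'_j` for every edge `(i,j)`
of `G` with `i < j`; and `O A_i` and `A_i A'_i` for every `i`. -/
def dRel {n : ℕ} (G : SimpleGraph (Fin n)) : DVert n → DVert n → Prop
  | .A i, .A j => G.Adj i j
  | .A' i, .A' j => G.Adj i j
  | .A i, .A' j => (G.Adj i j ∧ i < j) ∨ i = j
  | .O, .A _ => True
  | _, _ => False

/-- The doubled graph `G̃`. -/
def doubled {n : ℕ} (G : SimpleGraph (Fin n)) : SimpleGraph (DVert n) :=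
  SimpleGraph.fromRel (dRel G)

/-- `m₀ = min_i min (f i) (g i)`, the global minimum of `f` and `g`. -/
noncomputable def m0 {n : ℕ} (hn : 0 < n) (f g : Fin n → ℝ) : ℝ :=
  Finset.univ.inf' ⟨⟨0, hn⟩, Finset.mem_univ _⟩ (fun i => min (f i) (g i))

/-- The filtration value `w̃` on vertices of the doubled graph:
`w̃(A_i) = f i`, `w̃(A'_i) = min (f i) (g i)`, `w̃(O) = m₀`. -/
noncomputable def wVert {n : ℕ} (hn : 0 < n) (f g : Fin n → ℝ) : DVert n → ℝ
  | .A i => f i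
  | .A' i => min (f i) (g i)
  | .O => m0 hn f g

/-- The filtration value `w̃` on edges of the doubled graph, given by the two endpoints:
`w̃(A_iA_j) = max (f i) (f j)`, `w̃(A'_iA'_j) = min (max (f i) (f j)) (max (g i) (g j))`,
`w̃(A_iA'_j) = max (f i) (f j)` (so in particular `w̃(A_iA'_i) = f i`), `w̃(O A_i) = f i`. -/
noncomputable def wEdge {n : ℕ} (f g : Fin n → ℝ) : DVert n → DVert n → ℝ
  | .A i, .A j => max (f i) (f j)
  | .A' i, .A' j => min (max (f i) (f j)) (max (g i) (g j))
  | .A i, .A' j => max (f i) (f j)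
  | .A' i, .A j => max (f i) (f j)
  | .O, .A i => f i
  | .A i, .O => f i
  | _, _ => 0

/-!
Every filtration value of `G̃` is built from values of `f` and `g` by `max`, `min` and a finite
`inf'`. These operations are monotone and commute with adding a constant, so raising `f` and `g`
by at most `ε` raises every filtration value by at most `ε`; the sublevel inclusions follow.
-/

section ShiftBounds

variable {α : Type*} [AddCommGroup α] [LinearOrder α] [IsOrderedAddMonoid α] {a b a' b' ε : α}

theorem max_le_max_add (ha : a' ≤ a + ε) (hb : b' ≤ b + ε) : max a' b' ≤ max a b + ε :=
  (max_le_max ha hb).trans_eq (max_add_add_right a b ε)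

theorem min_le_min_add (ha : a' ≤ a + ε) (hb : b' ≤ b + ε) : min a' b' ≤ min a b + ε :=
  (min_le_min ha hb).trans_eq (min_add_add_right a b ε)

theorem Finset.inf'_le_inf'_add {ι : Type*} {s : Finset ι} (hs : s.Nonempty) {F F' : ι → α}
    (hF : ∀ i ∈ s, F' i ≤ F i + ε) : s.inf' hs F' ≤ s.inf' hs F + ε :=
  sub_le_iff_le_add.mp <| Finset.le_inf' hs F fun i hi =>
    sub_le_iff_le_add.mpr ((Finset.inf'_le F' hi).trans (hF i hi))

theorem le_add_of_abs_sub_le (h : |a - b| ≤ ε) : b ≤ a + ε :=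
  sub_le_iff_le_add'.mp (abs_sub_le_iff.mp h).2

end ShiftBounds

section DoubledGraph

variable {n : ℕ} {f f' g g' : Fin n → ℝ} {ε : ℝ}

theorem wVert_le_add (hn : 0 < n) (hf : ∀ i, f' i ≤ f i + ε) (hg : ∀ i, g' i ≤ g i + ε) :
    ∀ v : DVert n, wVert hn f' g' v ≤ wVert hn f g v + ε
  | .A i => hf i
  | .A' i => min_le_min_add (hf i) (hg i)
  | .O => Finset.inf'_le_inf'_add ⟨⟨0, hn⟩, Finset.mem_univ _⟩ fun i _ =>
    min_le_min_add (hf i) (hg i)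

theorem wEdge_le_add (G : SimpleGraph (Fin n)) (hf : ∀ i, f' i ≤ f i + ε)
    (hg : ∀ i, g' i ≤ g i + ε) :
    ∀ {u v : DVert n}, (doubled G).Adj u v → wEdge f' g' u v ≤ wEdge f g u v + ε
  | .A i, .A j, _ | .A i, .A' j, _ | .A' i, .A j, _ => max_le_max_add (hf i) (hf j)
  | .A' i, .A' j, _ =>
    min_le_min_add (max_le_max_add (hf i) (hf j)) (max_le_max_add (hg i) (hg j))
  | .O, .A i, _ | .A i, .O, _ => hf i
  | .A' _, .O, h | .O, .A' _, h | .O, .O, h => by simp [doubled, dRel] at h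

end DoubledGraph

theorem sublevel_interleaving_general {n : ℕ} (hn : 0 < n) (G : SimpleGraph (Fin n))
    (f f' g g' : Fin n → ℝ) (ε : ℝ)
    (hf : ∀ i, |f i - f' i| ≤ ε) (hg : ∀ i, |g i - g' i| ≤ ε) :
    ∀ α : ℝ,
      (∀ v : DVert n, wVert hn f g v ≤ α → wVert hn f' g' v ≤ α + ε) ∧
      (∀ u v : DVert n, (doubled G).Adj u v → wEdge f g u v ≤ α →
        wEdge f' g' u v ≤ α + ε) := by
  have hf' i := le_add_of_abs_sub_le (hf i)
  have hg' i := le_add_of_abs_sub_le (hg i)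
  intro α
  exact ⟨fun v hv => (wVert_le_add hn hf' hg' v).trans (by linarith),
    fun u v huv hα => (wEdge_le_add G hf' hg' huv).trans (by linarith)⟩

theorem sublevel_interleaving {n : ℕ} (hn : 0 < n) (G : SimpleGraph (Fin n))
    (f f' g g' : Fin n → ℝ) (ε : ℝ) (hε : 0 ≤ ε)
    (hf : ∀ i, |f i - f' i| ≤ ε) (hg : ∀ i, |g i - g' i| ≤ ε) :
    ∀ α : ℝ,
      (∀ v : DVert n, wVert hn f g v ≤ α → wVert hn f' g' v ≤ α + ε) ∧
      (∀ u v : DVert n, (doubled G).Adj u v → wEdge f g u v ≤ α →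
        wEdge f' g' u v ≤ α + ε) :=
  sublevel_interleaving_general hn G f f' g g' ε hf hg
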